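/- Let p ∈ R̄^I be a profile and i ∈ I such that the normalized utility function u_j is simple (has finite range) for every agent j ∈ I ∖ {i}. Then for every act f ∈ 𝒜 there exists a simple act g ∈ 𝒜 (an act with finite range) such that f ∼_j g for all j ∈ I; equivalently, ∫(u_j∘f)dπ_j = ∫(u_j∘g)dπ_j for every j ∈ I. -/

import Mathlib

open MeasureTheory

/-- An act: a measurable map from states to outcomes. -/
abbrev Act (Ω O : Type*) [MeasurableSpace Ω] [MeasurableSpace O] : Type _ :=
  {f : Ω → O // Measurable f}

/-- Non-atomicity of a measure relative to an explicit σ-algebra `m'`: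
for every `m'`-measurable set of positive measure there is an `m'`-measurable
subset of strictly smaller positive measure. -/
def NonatomicOn {Ω : Type*} [MeasurableSpace Ω] (π : MeasureTheory.Measure Ω)
    (m' : MeasurableSpace Ω) : Prop :=
  ∀ E : Set Ω, MeasurableSet[m'] E → 0 < π E →
    ∃ F : Set Ω, MeasurableSet[m'] F ∧ F ⊆ E ∧ 0 < π F ∧ π F < π E

section Framework

variable {Ω O I : Type*} [mΩ : MeasurableSpace Ω] [mO : MeasurableSpace O]

/-- A belief: a non-atomic (countably additive) probability measure. -/
def IsBelief (π : Measure Ω) : Prop :=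
  IsProbabilityMeasure π ∧ NonatomicOn π mΩ

/-- A utility function: a bounded measurable function on outcomes. -/
def IsUtility (u : O → ℝ) : Prop :=
  Measurable u ∧ ∃ M : ℝ, ∀ x, |u x| ≤ M

/-- A normalized utility function: measurable with infimum 0 and supremum 1. -/
def NormalizedUtility (u : O → ℝ) : Prop :=
  Measurable u ∧ IsGLB (Set.range u) 0 ∧ IsLUB (Set.range u) 1

/-- Member of `𝒰̄`: normalized or identically zero. -/
def NormalizedUtilityBar (u : O → ℝ) : Prop :=
  NormalizedUtility u ∨ u = 0

/-- Subjective expected utility of an act. -/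
noncomputable def ev (π : Measure Ω) (u : O → ℝ) (f : Act Ω O) : ℝ :=
  ∫ ω, u (f.1 ω) ∂π

/-- Preference relations over acts. -/
abbrev Pref (Ω O : Type*) [MeasurableSpace Ω] [MeasurableSpace O] :=
  Act Ω O → Act Ω O → Prop

/-- `(π, u)` represents `r`: `f ≿ g` iff the expected utility of `f` is at least
that of `g`. -/
def Represents (π : Measure Ω) (u : O → ℝ) (r : Pref Ω O) : Prop :=
  ∀ f g : Act Ω O, r f g ↔ ev π u g ≤ ev π u f

/-- A normalized representation: a belief together with a normalized (or zero)
utility function representing the relation. -/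
def NormRep (π : Measure Ω) (u : O → ℝ) (r : Pref Ω O) : Prop :=
  IsBelief π ∧ NormalizedUtilityBar u ∧ Represents π u r

/-- Membership in `R̄`: the relation maximizes subjective expected utility. -/
def IsSEU (r : Pref Ω O) : Prop :=
  ∃ (π : Measure Ω) (u : O → ℝ), IsBelief π ∧ IsUtility u ∧ Represents π u r

/-- Complete indifference: the relation with empty strict part. -/
def CompletelyIndifferent (r : Pref Ω O) : Prop :=
  ∀ f g : Act Ω O, r f g

/-- `π` is a belief representing `r` (together with some utility function). -/
def RepresentsBelief (π : Measure Ω) (r : Pref Ω O) : Prop :=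
  IsBelief π ∧ ∃ u : O → ℝ, IsUtility u ∧ Represents π u r

/-- A preference profile: every agent's relation is SEU-maximizing. -/
def IsProfile (p : I → Pref Ω O) : Prop := ∀ i, IsSEU (p i)

/-- The completely indifferent relation. -/
def indiffRel : Pref Ω O := fun _ _ => True

open Classical in
/-- `p_{∼i}`: replace agent `i`'s relation by complete indifference. -/
noncomputable def updIndiff (p : I → Pref Ω O) (i : I) : I → Pref Ω O :=
  fun j => if j = i then indiffRel else p j

/-- `p_{∼{i,j}}`. -/
noncomputable def updIndiffPair (p : I → Pref Ω O) (i j : I) : I → Pref Ω O :=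
  updIndiff (updIndiff p i) j

open Classical in
/-- `I_p`: the set of concerned agents. -/
noncomputable def concerned [Fintype I] (p : I → Pref Ω O) : Finset I :=
  Finset.univ.filter fun i => ¬ CompletelyIndifferent (p i)

/-- Equivalence of utility functions: equality up to a positive affine
transformation. -/
def UEquiv (u v : O → ℝ) : Prop :=
  ∃ a : ℝ, 0 < a ∧ ∃ b : ℝ, ∀ x, u x = a * v x + b

/-- The beliefs `(πa i)_{i ∈ J}` are affinely independent. -/
def BeliefsAffIndep (J : Finset I) (πa : I → Measure Ω) : Prop :=
  ∀ c : I → ℝ, (∑ i ∈ J, c i) = 0 →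
    (∀ E : Set Ω, MeasurableSet E → (∑ i ∈ J, c i * (πa i E).toReal) = 0) →
    ∀ i ∈ J, c i = 0

/-- The utility functions `(ua i)_{i ∈ J}` are linearly independent: no
nontrivial linear combination of them is a constant function. -/
def UtilsLinIndep (J : Finset I) (ua : I → O → ℝ) : Prop :=
  ∀ c : I → ℝ, (∃ b : ℝ, ∀ x, (∑ i ∈ J, c i * ua i x) = b) → ∀ i ∈ J, c i = 0

/-- The profile has non-degenerate beliefs: the beliefs of any pair and any
triple of concerned agents are affinely independent. -/
def NonDegenerateBeliefs [Fintype I] (p : I → Pref Ω O) (πa : I → Measure Ω) : Prop :=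
  ∀ J : Finset I, J ⊆ concerned p → (J.card = 2 ∨ J.card = 3) → BeliefsAffIndep J πa

/-- The profile has non-degenerate utilities: the utility functions of any pair
and any triple of concerned agents are linearly independent. -/
def NonDegenerateUtils [Fintype I] (p : I → Pref Ω O) (ua : I → O → ℝ) : Prop :=
  ∀ J : Finset I, J ⊆ concerned p → (J.card = 2 ∨ J.card = 3) → UtilsLinIndep J ua

/-- The belief dimension of the beliefs `(πa i)_{i ∈ J}` is at least `n`. -/
def BeliefDimAtLeast (n : ℕ) (J : Finset I) (πa : I → Measure Ω) : Prop :=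
  ∃ E : Fin n → Set Ω, (∀ k, MeasurableSet (E k)) ∧
    ∀ c : Fin n → ℝ, (∀ i ∈ J, (∑ k, c k * (πa i (E k)).toReal) = 0) → ∀ k, c k = 0

/-- The utility dimension of the utility functions `(ua i)_{i ∈ J}` is at
least `n`. -/
def UtilDimAtLeast (n : ℕ) (J : Finset I) (ua : I → O → ℝ) : Prop :=
  ∃ q : Fin n → Measure O, (∀ k, IsProbabilityMeasure (q k)) ∧
    ∀ c : Fin n → ℝ, (∀ i ∈ J, (∑ k, c k * ∫ x, ua i x ∂(q k)) = 0) → ∀ k, c k = 0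

open Classical in
/-- The expected utility function of an SEU relation (via a choice of a
normalized representation). -/
noncomputable def evOf (r : Pref Ω O) : Act Ω O → ℝ :=
  if h : ∃ π : Measure Ω, ∃ u : O → ℝ, NormRep π u r then
    fun f => ev h.choose h.choose_spec.choose f
  else fun _ => 0

/-- The uniform metric on `R`. -/
noncomputable def prefDist (r r' : Pref Ω O) : ℝ :=
  ⨆ f : Act Ω O, |evOf r f - evOf r' f|

/-- Continuity of a real-valued function on `R` with respect to the uniform
metric. -/
def ContOnR (h : Pref Ω O → ℝ) : Prop :=
  ∀ r : Pref Ω O, IsSEU r → ¬ CompletelyIndifferent r →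
    ∀ ε : ℝ, 0 < ε → ∃ δ : ℝ, 0 < δ ∧
      ∀ r' : Pref Ω O, IsSEU r' → ¬ CompletelyIndifferent r' →
        prefDist r r' < δ → |h r' - h r| < ε

/-- Open sets of `R̄`: the whole space `R̄` together with the metrically open
subsets of `R`. -/
def OpenInRbar (S : Set (Pref Ω O)) : Prop :=
  S = {r | IsSEU r} ∨
    ∀ r ∈ S, IsSEU r ∧ ¬ CompletelyIndifferent r ∧
      ∃ ε : ℝ, 0 < ε ∧ ∀ r' : Pref Ω O, IsSEU r' → ¬ CompletelyIndifferent r' →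
        prefDist r r' < ε → r' ∈ S

/-- Restricted monotonicity (on a domain `D` of profiles). -/
def RestrictedMonotonicityOn (D : (I → Pref Ω O) → Prop)
    (Φ : (I → Pref Ω O) → Pref Ω O) : Prop :=
  ∀ (i : I) (p : I → Pref Ω O), D p →
    ∀ πsi πi : Measure Ω,
      RepresentsBelief πsi (Φ (updIndiff p i)) → RepresentsBelief πi (p i) →
      ∀ f g : Act Ω O,
        Φ (updIndiff p i) f g → Φ (updIndiff p i) g f →
        Measure.map f.1 πsi = Measure.map f.1 πi →
        Measure.map g.1 πsi = Measure.map g.1 πi →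
        (p i f g → Φ p f g) ∧ ((p i f g ∧ ¬ p i g f) → (Φ p f g ∧ ¬ Φ p g f))

abbrev RestrictedMonotonicity (Φ : (I → Pref Ω O) → Pref Ω O) : Prop :=
  RestrictedMonotonicityOn IsProfile Φ

/-- Faithfulness (on a domain `D`). -/
def FaithfulOn (D : (I → Pref Ω O) → Prop) (Φ : (I → Pref Ω O) → Pref Ω O) : Prop :=
  ∀ p : I → Pref Ω O, D p → (∀ i, CompletelyIndifferent (p i)) →
    CompletelyIndifferent (Φ p)

abbrev Faithful (Φ : (I → Pref Ω O) → Pref Ω O) : Prop := FaithfulOn IsProfile Φ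

/-- No belief imposition (on a domain `D`). -/
def NoBeliefImpositionOn (D : (I → Pref Ω O) → Prop)
    (Φ : (I → Pref Ω O) → Pref Ω O) : Prop :=
  ∀ (i : I) (p : I → Pref Ω O), D p →
    ¬ CompletelyIndifferent (Φ (updIndiff p i)) →
    ¬ CompletelyIndifferent (Φ p) →
    ¬ CompletelyIndifferent (p i) →
    ∀ πsi π πi : Measure Ω,
      RepresentsBelief πsi (Φ (updIndiff p i)) →
      RepresentsBelief π (Φ p) → RepresentsBelief πi (p i) →
      πsi ≠ πi → π ≠ πi

abbrev NoBeliefImposition (Φ : (I → Pref Ω O) → Pref Ω O) : Prop :=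
  NoBeliefImpositionOn IsProfile Φ

/-- Continuity of an SWF (on a domain `D`), with respect to the topology of
`R̄` and the product topology on profiles. -/
def ContinuousSWFOn (D : (I → Pref Ω O) → Prop)
    (Φ : (I → Pref Ω O) → Pref Ω O) : Prop :=
  ∀ S : Set (Pref Ω O), OpenInRbar S →
    ∀ p : I → Pref Ω O, D p → Φ p ∈ S →
      ∃ T : I → Set (Pref Ω O), (∀ i, OpenInRbar (T i)) ∧ (∀ i, p i ∈ T i) ∧
        ∀ q : I → Pref Ω O, D q → (∀ i, q i ∈ T i) → Φ q ∈ S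

abbrev ContinuousSWF (Φ : (I → Pref Ω O) → Pref Ω O) : Prop :=
  ContinuousSWFOn IsProfile Φ

/-- Anonymity (on a domain `D`). -/
def AnonymousOn (D : (I → Pref Ω O) → Prop)
    (Φ : (I → Pref Ω O) → Pref Ω O) : Prop :=
  ∀ p : I → Pref Ω O, D p → ∀ η : Equiv.Perm I, Φ (fun i => p (η i)) = Φ p

abbrev Anonymous (Φ : (I → Pref Ω O) → Pref Ω O) : Prop := AnonymousOn IsProfile Φ

/-- The regular set of acts `𝒜(ℰ', O')`. -/
def RegularActs (m' : MeasurableSpace Ω) (O' : Set O) : Set (@Act Ω O mΩ mO) :=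
  {f : @Act Ω O mΩ mO | @Measurable Ω O m' mO f.1 ∧ Set.range f.1 ⊆ O'}

/-- `𝒜(ℰ', O')` is co-redundant for `p` (with representing beliefs `πa`). -/
def CoRedundant (m' : MeasurableSpace Ω) (O' : Set O)
    (p : I → @Pref Ω O mΩ mO) (πa : I → @MeasureTheory.Measure Ω mΩ) : Prop :=
  (∀ f : @Act Ω O mΩ mO, ∃ g ∈ @RegularActs Ω O mΩ mO m' O', ∀ i, p i f g ∧ p i g f) ∧
  (∀ i, @NonatomicOn Ω mΩ (πa i) m')

/-- Independence of redundant acts (on a domain `D`). -/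
def IndepRedundantActsOn (D : (I → Pref Ω O) → Prop)
    (Φ : (I → Pref Ω O) → Pref Ω O) : Prop :=
  ∀ (p p' : I → Pref Ω O) (πa πa' : I → Measure Ω),
    D p → D p' →
    (∀ i, RepresentsBelief (πa i) (p i)) →
    (∀ i, RepresentsBelief (πa' i) (p' i)) →
    ∀ (m' : {m : MeasurableSpace Ω // m ≤ mΩ}) (O' : Set O),
      CoRedundant m'.1 O' p πa → CoRedundant m'.1 O' p' πa' →
      (∀ i : I, ∀ f ∈ RegularActs m'.1 O', ∀ g ∈ RegularActs m'.1 O',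
        (p i f g ↔ p' i f g)) →
      ∀ f ∈ RegularActs m'.1 O', ∀ g ∈ RegularActs m'.1 O',
        (Φ p f g ↔ Φ p' f g)

abbrev IndepRedundantActs (Φ : (I → Pref Ω O) → Pref Ω O) : Prop :=
  IndepRedundantActsOn IsProfile Φ

/-- The weighted average of the concerned agents' beliefs with weights `v`. -/
noncomputable def mixBelief [Fintype I] (p : I → Pref Ω O) (πa : I → Measure Ω)
    (v : I → ℝ) : Measure Ω :=
  (ENNReal.ofReal ((∑ i ∈ concerned p, v i)⁻¹)) •
    ∑ i ∈ concerned p, ENNReal.ofReal (v i) • πa i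

/-- The weighted sum of the concerned agents' utility functions with weights
`w`. -/
noncomputable def mixUtil [Fintype I] (p : I → Pref Ω O) (ua : I → O → ℝ)
    (w : I → ℝ) : O → ℝ :=
  fun x => ∑ i ∈ concerned p, w i * ua i x

/-- A common utility profile: every concerned agent's normalized utility
function is equivalent to `u` or to `-u` for a single `u ∈ 𝒰`. -/
def CommonUtilityProfile [Fintype I] (p : I → Pref Ω O) (ua : I → O → ℝ) : Prop :=
  ∃ u : O → ℝ, NormalizedUtility u ∧
    ∀ i ∈ concerned p, UEquiv (ua i) u ∨ UEquiv (ua i) (fun x => - u x)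

end Framework

/-!
Group the states by the vector of utilities `(u_j ∘ f)_{j ≠ i}`; since these utilities are simple,
this is a finite measurable partition, and each agent `j ≠ i` is indifferent between all values
`f` takes on a cell. On a cell `E` pick states `ω₁, ω₂ ∈ E` with
`u_i (f ω₁) ≤ ⨍_E u_i ∘ f ≤ u_i (f ω₂)`. Because `π_i` is non-atomic, Sierpiński's theorem gives a
subset `F ⊆ E` of any prescribed measure, so `F` can be chosen such that the act equal to `f ω₁` on
`F` and `f ω₂` on `E \ F` has the same `π_i`-expected utility on `E` as `f`. Gluing these
two-valued acts over the cells gives the simple act `g`.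
-/

open Set Filter Topology
open scoped ENNReal

theorem ENNReal.exists_mem_forall_half_le {α : Type*} {s : Set α} (hs : s.Nonempty)
    {f : α → ℝ≥0∞} {C : ℝ≥0∞} (hC : C ≠ ∞) (hfC : ∀ a ∈ s, f a ≤ C) :
    ∃ a ∈ s, ∀ b ∈ s, f b / 2 ≤ f a := by
  set M := ⨆ b ∈ s, f b
  have hle : ∀ b ∈ s, f b ≤ M := fun b hb => le_biSup f hb
  rcases eq_or_ne M 0 with hM | hM
  · obtain ⟨a, ha⟩ := hs
    exact ⟨a, ha, fun b hb => by simp [le_zero_iff.1 (hM ▸ hle b hb)]⟩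
  have hMtop : M ≠ ∞ := ne_top_of_le_ne_top hC (iSup₂_le hfC)
  obtain ⟨a, ha, hMa⟩ := lt_biSup_iff.1 (ENNReal.half_lt_self hM hMtop)
  exact ⟨a, ha, fun b hb => (ENNReal.div_le_div_right (hle b hb) 2).trans hMa.le⟩

section Utility

variable {Ω O : Type*} [MeasurableSpace Ω] [MeasurableSpace O]

theorem NormalizedUtilityBar.isUtility {u : O → ℝ} (hu : NormalizedUtilityBar u) : IsUtility u := by
  rcases hu with ⟨hm, hglb, hlub⟩ | rfl
  · refine ⟨hm, 1, fun x => abs_le.2 ⟨?_, hlub.1 (mem_range_self x)⟩⟩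
    linarith [hglb.1 (mem_range_self x)]
  · exact ⟨measurable_const, 0, fun _ => by simp⟩

theorem IsUtility.integrable_comp {u : O → ℝ} (hu : IsUtility u) {μ : Measure Ω}
    [IsFiniteMeasure μ] {f : Ω → O} (hf : Measurable f) : Integrable (fun ω => u (f ω)) μ := by
  obtain ⟨hm, M, hM⟩ := hu
  exact .of_bound (hm.comp hf).aestronglyMeasurable M (ae_of_all _ fun ω => hM (f ω))

end Utility

theorem integral_eq_of_forall_setIntegral_fiber_eq {Ω β : Type*} [MeasurableSpace Ω]
    [MeasurableSpace β] [Countable β] [MeasurableSingletonClass β] {μ : Measure Ω} {v : Ω → β}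
    (hv : Measurable v) {φ ψ : Ω → ℝ} (hφ : Integrable φ μ) (hψ : Integrable ψ μ)
    (h : ∀ c, ∫ ω in v ⁻¹' {c}, φ ω ∂μ = ∫ ω in v ⁻¹' {c}, ψ ω ∂μ) :
    ∫ ω, φ ω ∂μ = ∫ ω, ψ ω ∂μ := by
  have hcover : ⋃ c, v ⁻¹' {c} = univ := by ext; simp
  have hm : ∀ c, MeasurableSet (v ⁻¹' {c}) := fun c => hv (measurableSet_singleton c)
  rw [← setIntegral_univ, ← setIntegral_univ (f := ψ), ← hcover,
    integral_iUnion hm (pairwise_disjoint_fiber v) hφ.integrableOn,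
    integral_iUnion hm (pairwise_disjoint_fiber v) hψ.integrableOn]
  exact tsum_congr h

theorem setIntegral_eq_of_eqOn_two_pieces {Ω : Type*} [MeasurableSpace Ω] {μ : Measure Ω}
    {E F : Set Ω} (hE : MeasurableSet E) (hF : MeasurableSet F) (hFE : F ⊆ E) {φ : Ω → ℝ}
    (hφ : IntegrableOn φ E μ) {a b : ℝ} (ha : ∀ ω ∈ F, φ ω = a) (hb : ∀ ω ∈ E \ F, φ ω = b) :
    ∫ ω in E, φ ω ∂μ = a * μ.real F + b * μ.real (E \ F) := by
  rw [← integral_inter_add_sdiff hF hφ, inter_eq_right.2 hFE, setIntegral_congr_fun hF ha,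
    setIntegral_congr_fun (hE.diff hF) hb, setIntegral_const, setIntegral_const, smul_eq_mul,
    smul_eq_mul, mul_comm, mul_comm (μ.real _)]

section FiniteMeasure

variable {Ω : Type*} [mΩ : MeasurableSpace Ω] {μ : Measure Ω} [IsFiniteMeasure μ]

theorem exists_greedy_exhaustion (E : Set Ω) (t : ℝ≥0∞) :
    ∃ F : ℕ → Set Ω, Monotone F ∧ (∀ n, F n ⊆ E ∧ MeasurableSet (F n) ∧ μ (F n) ≤ t) ∧
      ∀ n G, MeasurableSet G → G ⊆ E \ F n → μ (F n) + μ G ≤ t →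
        μ (F n) + μ G / 2 ≤ μ (F (n + 1)) := by
  have step : ∀ A : Set Ω, ∃ G₀ : Set Ω, μ A ≤ t →
      (MeasurableSet G₀ ∧ G₀ ⊆ E \ A ∧ μ A + μ G₀ ≤ t) ∧
      ∀ G, MeasurableSet G → G ⊆ E \ A → μ A + μ G ≤ t → μ G / 2 ≤ μ G₀ := by
    intro A
    by_cases hA : μ A ≤ t
    · obtain ⟨G₀, hG₀, hmax⟩ := ENNReal.exists_mem_forall_half_le
        (s := {G | MeasurableSet G ∧ G ⊆ E \ A ∧ μ A + μ G ≤ t})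
        ⟨∅, .empty, empty_subset _, by simpa using hA⟩ (measure_ne_top μ univ)
        (fun G _ => measure_mono (subset_univ G))
      exact ⟨G₀, fun _ => ⟨hG₀, fun G h₁ h₂ h₃ => hmax G ⟨h₁, h₂, h₃⟩⟩⟩
    · exact ⟨∅, fun h => absurd h hA⟩
  choose G₀ hG₀ using step
  set F : ℕ → Set Ω := fun n => (fun A => A ∪ G₀ A)^[n] ∅ with hF
  have hF_succ : ∀ n, F (n + 1) = F n ∪ G₀ (F n) := fun n =>
    Function.iterate_succ_apply' _ n ∅
  have hinv : ∀ n, F n ⊆ E ∧ MeasurableSet (F n) ∧ μ (F n) ≤ t := by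
    intro n
    induction n with
    | zero => simp [hF]
    | succ n ih =>
      obtain ⟨⟨hGm, hGE, hGt⟩, -⟩ := hG₀ (F n) ih.2.2
      rw [hF_succ]
      exact ⟨union_subset ih.1 (hGE.trans sdiff_subset), ih.2.1.union hGm,
        (measure_union_le _ _).trans hGt⟩
  refine ⟨F, monotone_nat_of_le_succ fun n => hF_succ n ▸ subset_union_left, hinv,
    fun n G hGm hGE hGt => ?_⟩
  obtain ⟨⟨hG₀m, hG₀E, -⟩, hmax⟩ := hG₀ (F n) (hinv n).2.2
  rw [hF_succ, measure_union (disjoint_sdiff_right.mono_right hG₀E) hG₀m]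
  gcongr
  exact hmax G hGm hGE hGt

namespace NonatomicOn

theorem exists_subset_pos_le_half (hna : NonatomicOn μ mΩ) {E : Set Ω} (hE : MeasurableSet E)
    (hpos : 0 < μ E) : ∃ F ⊆ E, MeasurableSet F ∧ 0 < μ F ∧ μ F ≤ μ E / 2 := by
  obtain ⟨F, hF, hFE, hFpos, hFlt⟩ := hna E hE hpos
  have hdiff : μ (E \ F) = μ E - μ F := measure_sdiff hFE hF.nullMeasurableSet (measure_ne_top μ F)
  rcases le_total (μ F) (μ E / 2) with h | h
  · exact ⟨F, hFE, hF, hFpos, h⟩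
  · refine ⟨E \ F, sdiff_subset, hE.diff hF, hdiff ▸ tsub_pos_of_lt hFlt, ?_⟩
    rw [hdiff, tsub_le_iff_right]
    calc μ E = μ E / 2 + μ E / 2 := (ENNReal.add_halves _).symm
    _ ≤ μ E / 2 + μ F := by gcongr

theorem exists_subset_pos_le (hna : NonatomicOn μ mΩ) {E : Set Ω} (hE : MeasurableSet E)
    (hpos : 0 < μ E) {ε : ℝ≥0∞} (hε : 0 < ε) : ∃ F ⊆ E, MeasurableSet F ∧ 0 < μ F ∧ μ F ≤ ε := by
  have halving : ∀ n : ℕ, ∃ F ⊆ E, MeasurableSet F ∧ 0 < μ F ∧ μ F ≤ μ E * 2⁻¹ ^ n := by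
    intro n
    induction n with
    | zero => exact ⟨E, subset_rfl, hE, hpos, by simp⟩
    | succ n ih =>
      obtain ⟨F, hFE, hF, hFpos, hFle⟩ := ih
      obtain ⟨G, hGF, hG, hGpos, hGle⟩ := hna.exists_subset_pos_le_half hF hFpos
      refine ⟨G, hGF.trans hFE, hG, hGpos, hGle.trans ?_⟩
      rw [pow_succ, ← mul_assoc, div_eq_mul_inv]
      gcongr
  have hlim : Tendsto (fun n : ℕ => μ E * 2⁻¹ ^ n) atTop (𝓝 0) := by
    simpa using ENNReal.Tendsto.const_mul
      (ENNReal.tendsto_pow_atTop_nhds_zero_of_lt_one (by norm_num)) (Or.inr (measure_ne_top μ E))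
  obtain ⟨n, hn⟩ := (hlim.eventually (gt_mem_nhds hε)).exists
  obtain ⟨F, hFE, hF, hFpos, hFle⟩ := halving n
  exact ⟨F, hFE, hF, hFpos, hFle.trans hn.le⟩

theorem exists_subset_measure_eq (hna : NonatomicOn μ mΩ) {E : Set Ω} (hE : MeasurableSet E)
    {t : ℝ≥0∞} (ht : t ≤ μ E) : ∃ F ⊆ E, MeasurableSet F ∧ μ F = t := by
  obtain ⟨F, hmono, hinv, hgrow⟩ := exists_greedy_exhaustion (μ := μ) E t
  have hFm : MeasurableSet (⋃ n, F n) := .iUnion fun n => (hinv n).2.1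
  have hFt : μ (⋃ n, F n) ≤ t := by
    rw [hmono.measure_iUnion]
    exact iSup_le fun n => (hinv n).2.2
  refine ⟨⋃ n, F n, iUnion_subset fun n => (hinv n).1, hFm, hFt.antisymm (not_lt.1 fun hlt => ?_)⟩
  have hrest : 0 < μ (E \ ⋃ n, F n) := by
    rw [measure_sdiff (iUnion_subset fun n => (hinv n).1) hFm.nullMeasurableSet
      (measure_ne_top μ _)]
    exact tsub_pos_of_lt (hlt.trans_le ht)
  -- a set that could be added at every stage forces unbounded growth
  obtain ⟨G, hGE, hGm, hGpos, hGle⟩ :=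
    hna.exists_subset_pos_le (hE.diff hFm) hrest (tsub_pos_of_lt hlt)
  have hlin : ∀ n : ℕ, n * (μ G / 2) ≤ μ (F n) := by
    intro n
    induction n with
    | zero => simp
    | succ n ih =>
      have hadm : μ (F n) + μ G ≤ t :=
        (add_le_add (measure_mono (subset_iUnion F n)) hGle).trans_eq (add_tsub_cancel_of_le hFt)
      calc ((n + 1 : ℕ) : ℝ≥0∞) * (μ G / 2) = n * (μ G / 2) + μ G / 2 := by push_cast; ring
      _ ≤ μ (F n) + μ G / 2 := by gcongr
      _ ≤ μ (F (n + 1)) :=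
        hgrow n G hGm (hGE.trans (sdiff_subset_sdiff_right (subset_iUnion F n))) hadm
  have hG2 : μ G / 2 ≠ 0 := (ENNReal.div_pos hGpos.ne' (ENNReal.ofNat_ne_top (n := 2))).ne'
  obtain ⟨n, hn⟩ := ENNReal.exists_nat_mul_gt hG2 (measure_ne_top μ E)
  exact (hn.trans_le (hlin n)).not_ge ((hinv n).2.2.trans ht)

theorem exists_two_point_setIntegral_eq (hna : NonatomicOn μ mΩ) {h : Ω → ℝ} {E : Set Ω}
    (hE : MeasurableSet E) (hne : E.Nonempty) (hh : IntegrableOn h E μ) :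
    ∃ ω₁ ∈ E, ∃ ω₂ ∈ E, ∃ F ⊆ E, MeasurableSet F ∧
      h ω₁ * μ.real F + h ω₂ * μ.real (E \ F) = ∫ ω in E, h ω ∂μ := by
  obtain ⟨ω₀, hω₀⟩ := hne
  rcases eq_or_ne (μ E) 0 with hE0 | hE0
  · exact ⟨ω₀, hω₀, ω₀, hω₀, ∅, empty_subset _, .empty,
      by simp [measureReal_def, hE0, setIntegral_measure_zero]⟩
  have hrestr : μ.restrict E ≠ 0 := by rwa [Ne, Measure.restrict_eq_zero]
  have hnull : μ.restrict E Eᶜ = 0 := by simp [Measure.restrict_apply hE.compl]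
  obtain ⟨ω₁, hω₁, h₁⟩ := exists_notMem_null_le_average hrestr hh hnull
  obtain ⟨ω₂, hω₂, h₂⟩ := exists_notMem_null_average_le hrestr hh hnull
  rw [notMem_compl_iff] at hω₁ hω₂
  obtain ⟨a, b, ha, hb, hab, havg⟩ : ⨍ ω in E, h ω ∂μ ∈ segment ℝ (h ω₁) (h ω₂) := by
    rw [segment_eq_Icc (h₁.trans h₂)]
    exact ⟨h₁, h₂⟩
  have hat : ENNReal.ofReal (a * μ.real E) ≤ μ E := by
    rw [← ENNReal.ofReal_toReal (measure_ne_top μ E)]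
    exact ENNReal.ofReal_le_ofReal (mul_le_of_le_one_left measureReal_nonneg (by linarith))
  obtain ⟨F, hFE, hF, hμF⟩ := hna.exists_subset_measure_eq hE hat
  have hFr : μ.real F = a * μ.real E := by
    rw [measureReal_def, hμF, ENNReal.toReal_ofReal (by positivity)]
  have hDr : μ.real (E \ F) = b * μ.real E := by
    rw [measureReal_sdiff hFE hF, hFr, eq_sub_of_add_eq' hab]
    ring
  refine ⟨ω₁, hω₁, ω₂, hω₂, F, hFE, hF, ?_⟩
  rw [hFr, hDr, ← measure_smul_setAverage h (measure_ne_top μ E), ← havg, smul_eq_mul,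
    smul_eq_mul, smul_eq_mul]
  ring

theorem exists_finite_range_integral_comp_eq {O β : Type*} [MeasurableSpace O] [MeasurableSpace β]
    [Finite β] [MeasurableSingletonClass β] (hna : NonatomicOn μ mΩ) {u : O → ℝ}
    (hu : IsUtility u) {f : Ω → O} (hf : Measurable f) {v : Ω → β} (hv : Measurable v) :
    ∃ g : Ω → O, Measurable g ∧ (range g).Finite ∧ (∀ ω, ∃ ω', v ω' = v ω ∧ g ω = f ω') ∧
      ∫ ω, u (g ω) ∂μ = ∫ ω, u (f ω) ∂μ := by
  classical
  rcases isEmpty_or_nonempty Ω with hΩ | hΩ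
  · exact ⟨f, hf, finite_range f, fun ω => isEmptyElim ω, rfl⟩
  have hfib : ∀ c, MeasurableSet (v ⁻¹' {c}) := fun c => hv (measurableSet_singleton c)
  have hcell := fun c (hc : (v ⁻¹' {c}).Nonempty) =>
    hna.exists_two_point_setIntegral_eq (hfib c) hc (hu.integrable_comp (μ := μ) hf).integrableOn
  choose! ω₁ hω₁ ω₂ hω₂ F hFv hF hFeq using hcell
  set S := {ω | ω ∈ F (v ω)}
  have hS : MeasurableSet S := by
    have hSeq : S = ⋃ c, v ⁻¹' {c} ∩ F c := by ext; simp [S]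
    refine hSeq ▸ .iUnion fun c => ?_
    rcases (v ⁻¹' {c}).eq_empty_or_nonempty with hc | hc
    · simp [hc]
    · exact (hfib c).inter (hF c hc)
  set g := S.piecewise (f ∘ ω₁ ∘ v) (f ∘ ω₂ ∘ v)
  have hg : Measurable g := .piecewise hS ((hf.comp (measurable_of_finite ω₁)).comp hv)
    ((hf.comp (measurable_of_finite ω₂)).comp hv)
  refine ⟨g, hg, ?_, fun ω => ?_, integral_eq_of_forall_setIntegral_fiber_eq hv
    (hu.integrable_comp hg) (hu.integrable_comp hf) fun c => ?_⟩
  · refine ((finite_range (f ∘ ω₁)).union (finite_range (f ∘ ω₂))).subset ?_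
    rintro _ ⟨ω, rfl⟩
    by_cases hω : ω ∈ S
    · exact .inl ⟨v ω, by simp [g, hω]⟩
    · exact .inr ⟨v ω, by simp [g, hω]⟩
  · by_cases hω : ω ∈ S
    · exact ⟨ω₁ (v ω), hω₁ _ ⟨ω, rfl⟩, by simp [g, hω]⟩
    · exact ⟨ω₂ (v ω), hω₂ _ ⟨ω, rfl⟩, by simp [g, hω]⟩
  rcases (v ⁻¹' {c}).eq_empty_or_nonempty with hc | hc
  · simp [hc]
  rw [← hFeq c hc]
  refine setIntegral_eq_of_eqOn_two_pieces (hfib c) (hF c hc) (hFv c hc)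
    (hu.integrable_comp hg).integrableOn (fun ω hω => ?_) fun ω hω => ?_
  · have hvω : v ω = c := hFv c hc hω
    simp [g, S, hvω, hω]
  · have hvω : v ω = c := hω.1
    simp [g, S, hvω, hω.2]

end NonatomicOn

end FiniteMeasure

theorem stmt11_general {Ω O I : Type*} [mΩ : MeasurableSpace Ω] [mO : MeasurableSpace O]
    [Fintype I]
    (p : I → Pref Ω O)
    (πa : I → Measure Ω) (ua : I → O → ℝ)
    (hrep : ∀ j, NormRep (πa j) (ua j) (p j))
    (i : I) (hsimple : ∀ j, j ≠ i → (Set.range (ua j)).Finite)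
    (f : Act Ω O) :
    ∃ g : Act Ω O, (Set.range g.1).Finite ∧
      (∀ j, p j f g ∧ p j g f) ∧
      ∀ j, ev (πa j) (ua j) f = ev (πa j) (ua j) g := by
  have hu : ∀ j, IsUtility (ua j) := fun j => (hrep j).2.1.isUtility
  have : ∀ j : {j // j ≠ i}, Finite (range (ua j)) := fun j => (hsimple j j.2).to_subtype
  let v : Ω → ∀ j : {j // j ≠ i}, range (ua j) := fun ω j => ⟨ua j (f.1 ω), mem_range_self _⟩
  have hv : Measurable v := measurable_pi_lambda _ fun j => ((hu j).1.comp f.2).subtype_mk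
  have := (hrep i).1.1
  obtain ⟨g, hg, hgfin, hgv, hgi⟩ :=
    (hrep i).1.2.exists_finite_range_integral_comp_eq (hu i) f.2 hv
  have hev : ∀ j, ev (πa j) (ua j) f = ev (πa j) (ua j) ⟨g, hg⟩ := by
    intro j
    by_cases hj : j = i
    · subst hj
      exact hgi.symm
    refine integral_congr_ae (ae_of_all _ fun ω => ?_)
    obtain ⟨ω', hvω, hgω⟩ := hgv ω
    simpa [hgω, v] using (congrArg Subtype.val (congrFun hvω ⟨j, hj⟩)).symm
  refine ⟨⟨g, hg⟩, hgfin, fun j => ?_, hev⟩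
  rw [(hrep j).2.2, (hrep j).2.2]
  exact ⟨(hev j).ge, (hev j).le⟩

theorem stmt11 {Ω O I : Type*} [mΩ : MeasurableSpace Ω] [mO : MeasurableSpace O]
    [Fintype I] (hO : 4 ≤ Cardinal.mk O) (hI : 3 ≤ Fintype.card I)
    (p : I → Pref Ω O) (hp : IsProfile p)
    (πa : I → Measure Ω) (ua : I → O → ℝ)
    (hrep : ∀ j, NormRep (πa j) (ua j) (p j))
    (i : I) (hsimple : ∀ j, j ≠ i → (Set.range (ua j)).Finite)
    (f : Act Ω O) :
    ∃ g : Act Ω O, (Set.range g.1).Finite ∧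
      (∀ j, p j f g ∧ p j g f) ∧
      ∀ j, ev (πa j) (ua j) f = ev (πa j) (ua j) g :=
  stmt11_general (mΩ := mΩ) (mO := mO) p πa ua hrep i hsimple f
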